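/- arXiv:1207.6354 — 3 statements merged into one kernel-verified Lean document; each statement's English description precedes it below -/
import Mathlib

section
/- Suppose a sequence Z(t) ≥ 0 satisfies: Z(t+1) ≤ Z(t) − δ(t) whenever Z(t) ≥ ν_max, and Z(t+1) ≤ ν_max + μ_in always, where |δ(t)| ≤ δ_max and δ_max = max(ν_max, μ_in). Let ε > 0 and w = (ε/δ_max²)·e^{−ε/δ_max}. Then for any Q > 0 and all t: e^{w(Z(t+1)−Q)} − e^{w(Z(t)−Q)} ≤ e^{w(ν_max + μ_in)} − w·e^{w(Z(t)−Q)}·(δ(t) − ε/2). -/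
/-! If `Z t ≥ ν_max` the queue drifts down by `δ t`, so the new exponential is at most
`e^{w(Z t - Q)} e^{-wδ}`; the second-order Taylor bound `e^y ≤ 1 + y + (a²/2) e^a` for `|y| ≤ a`,
with `a = w δ_max = s e^{-s}` and `s = ε / δ_max`, bounds `e^{-wδ}` by `1 - wδ + wε/2`, because
`a² e^a ≤ s² e^{-2s} e^s = wε`. Otherwise `Z (t+1) ≤ ν_max + μ_in` bounds the new exponential, and
`w δ_max = s e^{-s} ≤ 1` makes the drift term at most the old exponential. -/

open Real

namespace Real

theorem exp_le_one_add_add_sq_div_two_of_nonpos {y : ℝ} (hy : y ≤ 0) :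
    exp y ≤ 1 + y + y ^ 2 / 2 := by
  -- `(1 + y + y²/2)(1 - y + y²/2) = 1 + y⁴/4 ≥ 1`, and `e^{-y} ≥ 1 - y + y²/2`.
  have hlow : 1 - y + y ^ 2 / 2 ≤ exp (-y) := by
    simpa [sub_eq_add_neg] using quadratic_le_exp_of_nonneg (neg_nonneg.2 hy)
  have hprod : exp y * exp (-y) = 1 := by rw [← exp_add, add_neg_cancel, exp_zero]
  nlinarith [exp_pos y, sq_nonneg (y ^ 2), sq_nonneg (y + 1)]

theorem exp_le_one_add_add_sq_div_two_mul_exp_of_nonneg {y : ℝ} (hy : 0 ≤ y) :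
    exp y ≤ 1 + y + y ^ 2 / 2 * exp y := by
  -- `g y = e^{-y} (1 + y) + y²/2` has `g' y = y (1 - e^{-y}) ≥ 0` and `g 0 = 1`.
  set g : ℝ → ℝ := fun y => exp (-y) * (1 + y) + y ^ 2 / 2
  have hg : ∀ x, HasDerivAt g (x * (1 - exp (-x))) x := by
    intro x
    refine (((hasDerivAt_neg x).exp.mul ((hasDerivAt_id' x).const_add 1)).add
      ((hasDerivAt_pow 2 x).div_const 2)).congr_deriv ?_
    push_cast; ring
  have hmono : MonotoneOn g (Set.Ici 0) :=
    monotoneOn_of_deriv_nonneg (convex_Ici 0)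
      (fun x _ => (hg x).continuousAt.continuousWithinAt)
      (fun x _ => (hg x).differentiableAt.differentiableWithinAt)
      (fun x hx => by
        rw [interior_Ici, Set.mem_Ioi] at hx
        rw [(hg x).deriv]
        exact mul_nonneg hx.le (sub_nonneg.2 (exp_le_one_iff.2 (by linarith))))
  have h := hmono Set.self_mem_Ici hy hy
  simp only [g, neg_zero, exp_zero] at h
  have hprod : exp y * exp (-y) = 1 := by rw [← exp_add, add_neg_cancel, exp_zero]
  nlinarith [exp_pos y]

theorem exp_le_one_add_add_sq_div_two_mul_exp_of_abs_le {y a : ℝ} (hy : |y| ≤ a) :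
    exp y ≤ 1 + y + a ^ 2 / 2 * exp a := by
  have hsq : y ^ 2 ≤ a ^ 2 := sq_le_sq' (abs_le.1 hy).1 (abs_le.1 hy).2
  rcases le_total y 0 with hneg | hpos
  · have := exp_le_one_add_add_sq_div_two_of_nonpos hneg
    nlinarith [one_le_exp ((abs_nonneg y).trans hy)]
  · have hya : y ≤ a := (le_abs_self y).trans hy
    calc exp y ≤ 1 + y + y ^ 2 / 2 * exp y :=
          exp_le_one_add_add_sq_div_two_mul_exp_of_nonneg hpos
      _ ≤ 1 + y + a ^ 2 / 2 * exp a := by gcongr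

end Real

noncomputable def driftWeight (ε D : ℝ) : ℝ := ε / D ^ 2 * exp (-ε / D)

section driftWeight

variable {ε D : ℝ}

theorem driftWeight_pos (hε : 0 < ε) (hD : 0 < D) : 0 < driftWeight ε D := by
  unfold driftWeight; positivity

theorem driftWeight_mul_eq (hD : 0 < D) :
    driftWeight ε D * D = ε / D * exp (-(ε / D)) := by
  unfold driftWeight; rw [neg_div]; field_simp

theorem driftWeight_mul_le_one (hD : 0 < D) : driftWeight ε D * D ≤ 1 := by
  rw [driftWeight_mul_eq hD]
  exact (mul_exp_neg_le_exp_neg_one _).trans (exp_le_one_iff.2 (by norm_num))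

theorem sq_mul_exp_driftWeight_le (hε : 0 < ε) (hD : 0 < D) :
    (driftWeight ε D * D) ^ 2 / 2 * exp (driftWeight ε D * D) ≤ driftWeight ε D * ε / 2 := by
  set s := ε / D
  have hs : 0 ≤ s := by positivity
  have hwε : driftWeight ε D * ε = s ^ 2 * exp (-s) := by
    unfold driftWeight s; rw [neg_div]; field_simp
  have hwD_le : driftWeight ε D * D ≤ s := by
    rw [driftWeight_mul_eq hD]
    exact mul_le_of_le_one_right hs (exp_le_one_iff.2 (neg_nonpos.2 hs))
  calc (driftWeight ε D * D) ^ 2 / 2 * exp (driftWeight ε D * D)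
      ≤ (driftWeight ε D * D) ^ 2 / 2 * exp s := by gcongr
    _ = s ^ 2 * exp (-s) / 2 * (exp (-s) * exp s) := by rw [driftWeight_mul_eq hD]; ring
    _ = driftWeight ε D * ε / 2 := by rw [← exp_add, neg_add_cancel, exp_zero, hwε]; ring

end driftWeight

theorem exp_mul_sub_exp_mul_le_of_le_sub {w D ε δ x x' : ℝ} (hw : 0 ≤ w) (hδ : |δ| ≤ D)
    (hrem : (w * D) ^ 2 / 2 * exp (w * D) ≤ w * ε / 2) (hx : x' ≤ x - δ) :
    exp (w * x') - exp (w * x) ≤ -(w * exp (w * x) * (δ - ε / 2)) := by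
  have hwδ : |-(w * δ)| ≤ w * D := by
    rw [abs_neg, abs_mul, abs_of_nonneg hw]; exact mul_le_mul_of_nonneg_left hδ hw
  have htaylor : exp (-(w * δ)) ≤ 1 - w * δ + w * ε / 2 := by
    linarith [exp_le_one_add_add_sq_div_two_mul_exp_of_abs_le hwδ]
  have hstep : exp (w * x') ≤ exp (w * x) * exp (-(w * δ)) := by
    rw [← exp_add]
    exact exp_le_exp.2 (by nlinarith)
  nlinarith [exp_pos (w * x)]

theorem exp_mul_sub_exp_mul_le_of_le {w δ ε x x' B : ℝ} (hw : 0 ≤ w)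
    (hδ : w * (δ - ε / 2) ≤ 1) (hx' : x' ≤ B) :
    exp (w * x') - exp (w * x) ≤ exp (w * B) - w * exp (w * x) * (δ - ε / 2) := by
  have h : exp (w * x') ≤ exp (w * B) := by gcongr
  nlinarith [exp_pos (w * x)]

theorem exp_drift_upper_general (Z δ : ℕ → ℝ) (ν_max μ_in ε Q : ℝ)
    (hν : 0 < ν_max) (hε : 0 < ε) (hQ : 0 < Q)
    (hδ : ∀ t, |δ t| ≤ max ν_max μ_in)
    (hdyn1 : ∀ t, ν_max ≤ Z t → Z (t + 1) ≤ Z t - δ t)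
    (hdyn2 : ∀ t, Z (t + 1) ≤ ν_max + μ_in ∨ ν_max ≤ Z t) :
    ∀ t,
      let δ_max := max ν_max μ_in
      let w := (ε / δ_max ^ 2) * Real.exp (-ε / δ_max)
      Real.exp (w * (Z (t + 1) - Q)) - Real.exp (w * (Z t - Q)) ≤
        Real.exp (w * (ν_max + μ_in)) -
          w * Real.exp (w * (Z t - Q)) * (δ t - ε / 2) := by
  intro t δ_max w
  have hD : 0 < δ_max := lt_max_of_lt_left hν
  have hw : 0 < w := driftWeight_pos hε hD
  rcases le_or_gt ν_max (Z t) with hdrift | hsmall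
  · have := exp_mul_sub_exp_mul_le_of_le_sub hw.le (hδ t) (sq_mul_exp_driftWeight_le hε hD)
      (x := Z t - Q) (x' := Z (t + 1) - Q) (by linarith [hdyn1 t hdrift])
    linarith [exp_pos (w * (ν_max + μ_in))]
  · refine exp_mul_sub_exp_mul_le_of_le hw.le ?_ ?_
    · have hwδ : w * δ t ≤ w * δ_max := mul_le_mul_of_nonneg_left (abs_le.1 (hδ t)).2 hw.le
      have hwD : w * δ_max ≤ 1 := driftWeight_mul_le_one hD
      nlinarith
    · linarith [(hdyn2 t).resolve_right hsmall.not_ge]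

theorem exp_drift_upper (Z δ : ℕ → ℝ) (ν_max μ_in ε Q : ℝ)
    (hν : 0 < ν_max) (hμ : 0 < μ_in) (hε : 0 < ε) (hQ : 0 < Q)
    (hZ : ∀ t, 0 ≤ Z t)
    (hδ : ∀ t, |δ t| ≤ max ν_max μ_in)
    (hdyn1 : ∀ t, ν_max ≤ Z t → Z (t + 1) ≤ Z t - δ t)
    (hdyn2 : ∀ t, Z (t + 1) ≤ ν_max + μ_in ∨ ν_max ≤ Z t) :
    ∀ t,
      let δ_max := max ν_max μ_in
      let w := (ε / δ_max ^ 2) * Real.exp (-ε / δ_max)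
      Real.exp (w * (Z (t + 1) - Q)) - Real.exp (w * (Z t - Q)) ≤
        Real.exp (w * (ν_max + μ_in)) -
          w * Real.exp (w * (Z t - Q)) * (δ t - ε / 2) :=
  exp_drift_upper_general Z δ ν_max μ_in ε Q hν hε hQ hδ hdyn1 hdyn2
end

section
/- Consider the drop-queue recursion D(t+1) = (D(t) − φ(t))⁺ + d̃(t), where d̃(t) ∈ [0, d_max], φ(t) = d_max if D(t) > Vθ and φ(t) = 0 otherwise, and D(0) = Vθ with V, θ, d_max > 0. Then for all t: Vθ − d_max ≤ D(t) ≤ Vθ + d_max. -/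
theorem drop_queue_bounds (D dtil : ℕ → ℝ) (V θ d_max : ℝ)
    (hV : 0 < V) (hθ : 0 < θ) (hd : 0 < d_max)
    (hdtil : ∀ t, 0 ≤ dtil t ∧ dtil t ≤ d_max)
    (hD0 : D 0 = V * θ)
    (hrec : ∀ t,
      D (t + 1) = max (D t - (if V * θ < D t then d_max else 0)) 0 + dtil t) :
    ∀ t, V * θ - d_max ≤ D t ∧ D t ≤ V * θ + d_max := by
  have hVθ : 0 < V * θ := mul_pos hV hθ
  intro t
  induction t with
  | zero => constructor <;> rw [hD0] <;> linarith
  | succ t ih =>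
    obtain ⟨hl, hu⟩ := ih
    obtain ⟨hd0, hd1⟩ := hdtil t
    rw [hrec t]
    by_cases h : V * θ < D t
    · rw [if_pos h]
      constructor
      · have : V * θ - d_max ≤ max (D t - d_max) 0 :=
          le_trans (by linarith) (le_max_left _ _)
        linarith
      · have : max (D t - d_max) 0 ≤ V * θ :=
          max_le (by linarith) (le_of_lt hVθ)
        linarith
    · rw [if_neg h]
      push_neg at h
      constructor
      · have : V * θ - d_max ≤ max (D t - 0) 0 :=
          le_trans (by linarith) (le_max_left _ _)
        linarith
      · have : max (D t - 0) 0 ≤ V * θ :=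
          max_le (by linarith) (le_of_lt hVθ)
        linarith
end

section
/- Suppose a virtual queue Z(t) satisfies Z(t+1) ≤ Z(t) + μ_in whenever Z(t) receives arrivals, and receives no arrivals (so Z(t+1) ≤ Z(t)) whenever w·e^{w(Z(t)−Q)} > Q_max, with Z(0) = 0, where Q_max = Vθ + 2d_max ≥ w. Then Z(t) ≤ Z_max := Q + (1/w)·log(Q_max/w) + μ_in for all t. -/
theorem virtual_queue_bound (Z : ℕ → ℝ) (w Q μ_in V θ d_max : ℝ)
    (hw : 0 < w) (hQ : 0 < Q) (hμ : 0 < μ_in) (hV : 0 < V) (hθ : 0 < θ)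
    (hd : 0 < d_max)
    (hQmax : w ≤ V * θ + 2 * d_max)
    (hZ0 : Z 0 = 0) (hZ : ∀ t, 0 ≤ Z t)
    (harr : ∀ t, Z (t + 1) ≤ Z t + μ_in)
    (hnoarr : ∀ t, V * θ + 2 * d_max < w * Real.exp (w * (Z t - Q)) →
      Z (t + 1) ≤ Z t) :
    ∀ t, Z t ≤ Q + (1 / w) * Real.log ((V * θ + 2 * d_max) / w) + μ_in := by
  set Qm := V * θ + 2 * d_max with hQm
  have hQmpos : 0 < Qm := lt_of_lt_of_le hw hQmax
  have hratio : (1:ℝ) ≤ Qm / w := (one_le_div hw).2 hQmax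
  have hlog : 0 ≤ Real.log (Qm / w) := Real.log_nonneg hratio
  intro t
  induction t with
  | zero =>
    rw [hZ0]
    positivity
  | succ t ih =>
    by_cases hcase : Z t ≤ Q + (1 / w) * Real.log (Qm / w)
    · calc Z (t + 1) ≤ Z t + μ_in := harr t
        _ ≤ Q + (1 / w) * Real.log (Qm / w) + μ_in := by linarith
    · push_neg at hcase
      have hexp : Qm < w * Real.exp (w * (Z t - Q)) := by
        have h1 : Real.log (Qm / w) < w * (Z t - Q) := by
          have hc : w * ((1 / w) * Real.log (Qm / w)) = Real.log (Qm / w) := by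
            field_simp
          nlinarith [hcase, hw]
        have h2 : Qm / w < Real.exp (w * (Z t - Q)) := by
          calc Qm / w = Real.exp (Real.log (Qm / w)) :=
                (Real.exp_log (by positivity)).symm
            _ < Real.exp (w * (Z t - Q)) := Real.exp_lt_exp.2 h1
        calc Qm = w * (Qm / w) := by field_simp
          _ < w * Real.exp (w * (Z t - Q)) := by
              exact mul_lt_mul_of_pos_left h2 hw
      have := hnoarr t hexp
      linarith
end
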